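/- arXiv:1508.03128 — 2 statements merged into one kernel-verified Lean document; each statement's English description precedes it below -/
import Mathlib

section
/- Let G be a group and E ⊆ G^n an algebraic set, i.e., E = V(S) for some S ⊆ F_n where V(S) = {a ∈ G^n : ∀ w ∈ S, w(a) = 1}. If Rad(E) is a fully invariant subgroup of F_n, then E = ⋃_{a ∈ E} K(a)^n, where K(a) is the subgroup of G generated by a₁,…,aₙ. -/
/-- Evaluation of a word of the free group on `n` generators at a tuple `a : Fin n → G`. -/
def wEval {G : Type*} [Group G] {n : ℕ} (a : Fin n → G) : FreeGroup (Fin n) →* G :=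
  FreeGroup.lift a

/-- The radical of a subset `E ⊆ G^n`. -/
def Rad {G : Type*} [Group G] {n : ℕ} (E : Set (Fin n → G)) : Set (FreeGroup (Fin n)) :=
  {w | ∀ a ∈ E, wEval a w = 1}

/-- The algebraic set defined by a system of equations `S ⊆ F_n`. -/
def Vset (G : Type*) [Group G] {n : ℕ} (S : Set (FreeGroup (Fin n))) : Set (Fin n → G) :=
  {a | ∀ w ∈ S, wEval a w = 1}

/-- The "cube" `K^n` of a subgroup `K ≤ G`: tuples with all entries in `K`. -/
def cube {G : Type*} [Group G] (n : ℕ) (K : Subgroup G) : Set (Fin n → G) :=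
  {a | ∀ i, a i ∈ K}

/-- A set of words is fully invariant if it is stable under every endomorphism of `F_n`. -/
def FullyInvariant {n : ℕ} (H : Set (FreeGroup (Fin n))) : Prop :=
  ∀ α : FreeGroup (Fin n) →* FreeGroup (Fin n), ∀ w ∈ H, α w ∈ H

/-- A subgroup is `n`-generated if it is the closure of at most `n` elements. -/
def NGenerated {G : Type*} [Group G] (n : ℕ) (K : Subgroup G) : Prop :=
  ∃ s : Finset G, s.card ≤ n ∧ K = Subgroup.closure (s : Set G)

/-! An element `b` of `K(a)^n` is the image of `a` under the substitution `xᵢ ↦ vᵢ`, where `vᵢ` is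
a word with `vᵢ(a) = bᵢ`; so every equation satisfied by `E` is satisfied at `b` once `Rad E` is
stable under that substitution, and an algebraic set contains every solution of its radical. -/

section

variable {G : Type*} [Group G] {n : ℕ}

theorem self_mem_cube_closure_range (a : Fin n → G) :
    a ∈ cube n (Subgroup.closure (Set.range a)) :=
  fun i => Subgroup.subset_closure ⟨i, rfl⟩

theorem exists_comp_eq_wEval_of_mem_cube {a b : Fin n → G}
    (hb : b ∈ cube n (Subgroup.closure (Set.range a))) :
    ∃ α : FreeGroup (Fin n) →* FreeGroup (Fin n), (wEval a).comp α = wEval b := by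
  have hv : ∀ i, ∃ v, wEval a v = b i := fun i => by
    simpa only [wEval, ← FreeGroup.range_lift_eq_closure, MonoidHom.mem_range] using hb i
  choose v hv using hv
  exact ⟨FreeGroup.lift v, FreeGroup.ext_hom _ _ fun i => by simpa [wEval] using hv i⟩

theorem mem_Vset_Rad_of_mem_cube {E : Set (Fin n → G)}
    (hfi : FullyInvariant (Rad E)) {a b : Fin n → G} (ha : a ∈ E)
    (hb : b ∈ cube n (Subgroup.closure (Set.range a))) : b ∈ Vset G (Rad E) := by
  obtain ⟨α, hα⟩ := exists_comp_eq_wEval_of_mem_cube hb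
  intro w hw
  rw [← hα]
  exact hfi α w hw a ha

theorem Vset_Rad_Vset (S : Set (FreeGroup (Fin n))) :
    Vset G (Rad (Vset G S)) = Vset G S :=
  Set.Subset.antisymm (fun _ hb w hw => hb w fun _ hc => hc w hw) fun _ hb _ hw => hw _ hb

end

theorem algebraic_eq_union_of_fullyInvariant {G : Type*} [Group G] {n : ℕ}
    (E : Set (Fin n → G)) (halg : ∃ S : Set (FreeGroup (Fin n)), E = Vset G S)
    (hfi : FullyInvariant (Rad E)) :
    E = ⋃ a ∈ E, cube n (Subgroup.closure (Set.range a)) := by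
  obtain ⟨S, rfl⟩ := halg
  refine Set.Subset.antisymm (fun a ha => Set.mem_biUnion ha (self_mem_cube_closure_range a)) ?_
  refine Set.iUnion₂_subset fun a ha b hb => ?_
  rw [← Vset_Rad_Vset S]
  exact mem_Vset_Rad_of_mem_cube hfi ha hb
end

section
/- Let G be a group and E ⊆ G^n an algebraic set. Then Rad(E) is a fully invariant subgroup of F_n if and only if there exists a family {Kᵢ} of n-generated subgroups of G with E = ⋃ᵢ Kᵢ^n. -/
/-!
Substituting words `u₁, …, uₙ` into a word `w` and evaluating at `a` is the same as evaluating
`w` at the tuple `(u₁(a), …, uₙ(a))`, and as the `uᵢ` vary these tuples fill out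
`⟨a₁, …, aₙ⟩ⁿ`. Hence
`Rad E` is fully invariant iff `V(Rad E)` contains `⟨a₁, …, aₙ⟩ⁿ` for every `a ∈ E`. For
algebraic `E` we have `V(Rad E) = E`, and `E` contains all these cubes iff it is their union.
-/

open Subgroup

section

variable {G : Type*} [Group G] {n : ℕ}

theorem wEval_lift (a : Fin n → G) (u : Fin n → FreeGroup (Fin n)) (w : FreeGroup (Fin n)) :
    wEval a (FreeGroup.lift u w) = wEval (fun i => wEval a (u i)) w := by
  have : (wEval a).comp (FreeGroup.lift u) = wEval (fun i => wEval a (u i)) :=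
    FreeGroup.ext_hom _ _ fun i => by simp [wEval]
  exact DFunLike.congr_fun this w

theorem range_wEval (a : Fin n → G) : (wEval a).range = closure (Set.range a) :=
  FreeGroup.range_lift_eq_closure

theorem closure_range_le_iff {a : Fin n → G} {K : Subgroup G} :
    closure (Set.range a) ≤ K ↔ a ∈ cube n K := by
  rw [closure_le, Set.range_subset_iff]
  rfl

theorem mem_cube_closure_range_self (a : Fin n → G) : a ∈ cube n (closure (Set.range a)) :=
  closure_range_le_iff.mp le_rfl

theorem cube_mono {K L : Subgroup G} (h : K ≤ L) : cube n K ⊆ cube n L :=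
  fun _ ha i => h (ha i)

theorem nGenerated_closure_range (a : Fin n → G) : NGenerated n (closure (Set.range a)) := by
  classical
  refine ⟨Finset.univ.image a, Finset.card_image_le.trans (by simp), ?_⟩
  rw [Finset.coe_image, Finset.coe_univ, Set.image_univ]

theorem vset_rad_of_eq_vset {E : Set (Fin n → G)} {S : Set (FreeGroup (Fin n))}
    (hE : E = Vset G S) : Vset G (Rad E) = E := by
  refine Set.Subset.antisymm (fun b hb => ?_) (fun a ha w hw => hw a ha)
  rw [hE]
  intro w hwS
  refine hb w fun a ha => ?_
  rw [hE] at ha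
  exact ha w hwS

theorem fullyInvariant_rad_iff (E : Set (Fin n → G)) :
    FullyInvariant (Rad E) ↔
      ∀ a ∈ E, cube n (closure (Set.range a)) ⊆ Vset G (Rad E) := by
  constructor
  · intro hFI a ha b hb w hw
    have hu : ∀ i, ∃ u, wEval a u = b i := fun i => by
      rw [← MonoidHom.mem_range, range_wEval]
      exact hb i
    choose u hu using hu
    have hbu : b = fun i => wEval a (u i) := funext fun i => (hu i).symm
    rw [hbu, ← wEval_lift]
    exact hFI (FreeGroup.lift u) w hw a ha
  · intro hcube α w hw a ha
    have hα : α = FreeGroup.lift fun i => α (FreeGroup.of i) := FreeGroup.ext_hom _ _ fun i => by simp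
    show wEval a (α w) = 1
    rw [hα, wEval_lift]
    refine hcube a ha (fun i => ?_) w hw
    rw [← range_wEval]
    exact ⟨_, rfl⟩

theorem exists_eq_iUnion_cube_iff (E : Set (Fin n → G)) :
    (∃ 𝔎 : Set (Subgroup G), (∀ K ∈ 𝔎, NGenerated n K) ∧ E = ⋃ K ∈ 𝔎, cube n K) ↔
      ∀ a ∈ E, cube n (closure (Set.range a)) ⊆ E := by
  constructor
  · rintro ⟨𝔎, -, rfl⟩ a ha
    obtain ⟨K, hK, haK⟩ := Set.mem_iUnion₂.mp ha
    exact (cube_mono (closure_range_le_iff.mpr haK)).trans (Set.subset_biUnion_of_mem hK)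
  · intro hE
    refine ⟨{K | ∃ a ∈ E, K = closure (Set.range a)}, ?_, ?_⟩
    · rintro K ⟨a, -, rfl⟩
      exact nGenerated_closure_range a
    · refine Set.Subset.antisymm (fun a ha => ?_) (Set.iUnion₂_subset ?_)
      · exact Set.mem_biUnion ⟨a, ha, rfl⟩ (mem_cube_closure_range_self a)
      · rintro K ⟨a, ha, rfl⟩
        exact hE a ha

end

theorem rad_fullyInvariant_iff {G : Type*} [Group G] {n : ℕ}
    (E : Set (Fin n → G)) (halg : ∃ S : Set (FreeGroup (Fin n)), E = Vset G S) :
    FullyInvariant (Rad E) ↔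
      ∃ 𝔎 : Set (Subgroup G), (∀ K ∈ 𝔎, NGenerated n K) ∧ E = ⋃ K ∈ 𝔎, cube n K := by
  obtain ⟨S, hS⟩ := halg
  rw [fullyInvariant_rad_iff, vset_rad_of_eq_vset hS, exists_eq_iUnion_cube_iff]
end
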